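/- Let φ: 𝔼_2 → 𝔼_2 be a sequential endomorphism. Then φ is order-preserving: for all A, B ∈ 𝔼_2, if A ≤ B in the Loewner order, then φ(A) ≤ φ(B). -/

import Mathlib

open Matrix ComplexOrder

/-- A 2×2 effect: positive semidefinite and below the identity in the Loewner order. -/
def IsEffect2 (A : Matrix (Fin 2) (Fin 2) ℂ) : Prop :=
  A.PosSemidef ∧ (1 - A).PosSemidef

/-- The square root of a positive semidefinite matrix, as `Matrix.PosSemidef.sqrt` was defined
in the older Mathlib (removed since in favor of `CFC.sqrt`). -/
noncomputable def Matrix.PosSemidef.sqrt {n : Type*} [Fintype n] [DecidableEq n]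
    {A : Matrix n n ℂ} (hA : A.PosSemidef) : Matrix n n ℂ :=
  (hA.1.eigenvectorUnitary : Matrix n n ℂ) *
    diagonal ((↑) ∘ (√·) ∘ hA.1.eigenvalues) * (star hA.1.eigenvectorUnitary : Matrix n n ℂ)

section Aux

variable {n : Type*} [Fintype n] [DecidableEq n]

lemma aux_sandwich {V : Matrix n n ℂ} (hV : star V * V = 1) (a b : n → ℂ) :
    (V * diagonal a * star V) * (V * diagonal b * star V) =
      V * diagonal (a * b) * star V := by
  have h : V * diagonal a * star V * (V * diagonal b * star V)
      = V * diagonal a * (star V * V) * (diagonal b * star V) := by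
    simp only [Matrix.mul_assoc]
  rw [h, hV, Matrix.mul_one,
    show diagonal (a * b) = diagonal a * diagonal b from (diagonal_mul_diagonal a b).symm]
  simp only [Matrix.mul_assoc]

lemma Matrix.PosSemidef.sqrt_mul_self {A : Matrix n n ℂ} (hA : A.PosSemidef) :
    hA.sqrt * hA.sqrt = A := by
  have hV1 : star (hA.1.eigenvectorUnitary : Matrix n n ℂ) *
      (hA.1.eigenvectorUnitary : Matrix n n ℂ) = 1 := Unitary.coe_star_mul_self _
  have hsp := hA.1.spectral_theorem
  rw [Unitary.conjStarAlgAut_apply] at hsp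
  have hg : (((↑) ∘ (√·) ∘ hA.1.eigenvalues) * ((↑) ∘ (√·) ∘ hA.1.eigenvalues) : n → ℂ)
      = (RCLike.ofReal ∘ hA.1.eigenvalues : n → ℂ) := by
    funext i
    simp only [Pi.mul_apply, Function.comp_apply, ← Complex.ofReal_mul,
      Real.mul_self_sqrt (hA.eigenvalues_nonneg i)]
    rfl
  unfold Matrix.PosSemidef.sqrt
  rw [aux_sandwich hV1, hg]
  exact hsp.symm

lemma Matrix.PosSemidef.posSemidef_sqrt {A : Matrix n n ℂ} (hA : A.PosSemidef) :
    hA.sqrt.PosSemidef := by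
  have hd : (diagonal ((↑) ∘ (√·) ∘ hA.1.eigenvalues : n → ℂ)).PosSemidef := by
    refine PosSemidef.diagonal fun i => ?_
    simp only [Pi.zero_apply, Function.comp_apply, Complex.zero_le_real]
    exact Real.sqrt_nonneg _
  have := hd.mul_mul_conjTranspose_same (hA.1.eigenvectorUnitary : Matrix n n ℂ)
  unfold Matrix.PosSemidef.sqrt
  rwa [Matrix.star_eq_conjTranspose]

lemma aux_psd_neg_zero {X : Matrix n n ℂ} (hX : X.PosSemidef) (hX' : (-X).PosSemidef) :
    X = 0 := by
  have hz : ∀ x : n → ℂ, X *ᵥ x = 0 := by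
    intro x
    rw [← hX.dotProduct_mulVec_zero_iff]
    have h1 : (0 : ℂ) ≤ star x ⬝ᵥ X *ᵥ x := hX.dotProduct_mulVec_nonneg x
    have h2 : (0 : ℂ) ≤ star x ⬝ᵥ (-X) *ᵥ x := hX'.dotProduct_mulVec_nonneg x
    rw [neg_mulVec, dotProduct_neg] at h2
    exact le_antisymm (neg_nonneg.mp h2) h1
  ext i j
  have := congrFun (hz (Pi.single j 1)) i
  simpa [mulVec_single] using this

/-- Douglas-type factorization: if `0 ≤ A ≤ B` then `A = √B C √B` for some effect `C`. -/
lemma aux_factor {A B : Matrix n n ℂ} (hA : A.PosSemidef) (hB : B.PosSemidef)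
    (hBA : (B - A).PosSemidef) :
    ∃ C : Matrix n n ℂ, C.PosSemidef ∧ (1 - C).PosSemidef ∧
      hB.sqrt * C * hB.sqrt = A := by
  set d : n → ℝ := hB.1.eigenvalues with hd
  set V : Matrix n n ℂ := (hB.1.eigenvectorUnitary : Matrix n n ℂ) with hVdef
  have hV1 : star V * V = 1 := Unitary.coe_star_mul_self _
  have hV2 : V * star V = 1 := Unitary.coe_mul_star_self _
  -- various diagonal functions
  set f : n → ℂ := fun i => ((Real.sqrt (d i))⁻¹ : ℝ) with hf
  set g : n → ℂ := fun i => ((Real.sqrt (d i)) : ℝ) with hg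
  set p : n → ℂ := fun i => if d i = 0 then 0 else 1 with hp
  set q : n → ℂ := fun i => if d i = 0 then 1 else 0 with hq
  set S : Matrix n n ℂ := V * diagonal f * star V with hS
  set P : Matrix n n ℂ := V * diagonal p * star V with hP
  set Q : Matrix n n ℂ := V * diagonal q * star V with hQ
  have hBspec : B = V * diagonal (fun i => (d i : ℂ)) * star V := by
    have hsp := hB.1.spectral_theorem
    rw [Unitary.conjStarAlgAut_apply] at hsp
    exact hsp
  have hsqrt : hB.sqrt = V * diagonal g * star V := rfl
  have hdnn : ∀ i, 0 ≤ d i := hB.eigenvalues_nonneg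
  -- P + Q = 1
  have hPQ : P + Q = 1 := by
    rw [hP, hQ, ← Matrix.add_mul, ← Matrix.mul_add, diagonal_add]
    have : (fun i => p i + q i) = fun _ => (1 : ℂ) := by
      funext i; by_cases h : d i = 0 <;> simp [hp, hq, h]
    rw [this, diagonal_one, Matrix.mul_one, hV2]
  -- products
  have hfg : f * g = p := by
    funext i
    by_cases h : d i = 0
    · simp [hf, hg, hp, h]
    · have hs : Real.sqrt (d i) ≠ 0 := by
        rw [Real.sqrt_ne_zero'];
        exact lt_of_le_of_ne (hdnn i) (Ne.symm h)
      simp only [hf, hg, hp, Pi.mul_apply, if_neg h]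
      rw [← Complex.ofReal_mul, inv_mul_cancel₀ hs, Complex.ofReal_one]
  have hSB : S * hB.sqrt = P := by
    rw [hS, hsqrt, aux_sandwich hV1, hfg]
  have hBS : hB.sqrt * S = P := by
    rw [hS, hsqrt, aux_sandwich hV1]
    have hgf : g * f = p := by rw [mul_comm]; exact hfg
    rw [hgf]
  have hSBS : S * B * S = P := by
    have h1 : S * B = V * diagonal (f * fun i => (d i : ℂ)) * star V := by
      rw [hS, hBspec, aux_sandwich hV1]
    have h2 : S * B * S
        = V * diagonal ((f * fun i => (d i : ℂ)) * f) * star V := by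
      rw [h1, hS, aux_sandwich hV1]
    have hcoef : (f * fun i => (d i : ℂ)) * f = p := by
      funext i
      by_cases h : d i = 0
      · simp [hf, hp, h]
      · have hdi : 0 < d i := lt_of_le_of_ne (hdnn i) (Ne.symm h)
        have hs : Real.sqrt (d i) ≠ 0 := by
          rw [Real.sqrt_ne_zero']; exact hdi
        simp only [hf, hp, Pi.mul_apply, if_neg h]
        rw [← Complex.ofReal_mul, ← Complex.ofReal_mul]
        congr 1
        rw [← Real.sqrt_mul_self (hdnn i)]
        field_simp
        rw [Real.sq_sqrt (Real.sqrt_nonneg _)]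
    rw [h2, hcoef]
  -- B * Q = 0 and Q * B = 0
  have hBQ : B * Q = 0 := by
    rw [hBspec, hQ, aux_sandwich hV1]
    have : (fun i => (d i : ℂ)) * q = fun _ => (0 : ℂ) := by
      funext i; by_cases h : d i = 0 <;> simp [hq, h]
    rw [this, diagonal_zero, Matrix.mul_zero, Matrix.zero_mul]
  have hQherm : Qᴴ = Q := by
    rw [hQ, ← Matrix.star_eq_conjTranspose, Matrix.star_mul, Matrix.star_mul, star_star,
      Matrix.star_eq_conjTranspose (diagonal q), diagonal_conjTranspose]
    have : star q = q := by
      funext i; by_cases h : d i = 0 <;> simp [hq, h]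
    rw [this, Matrix.mul_assoc]
  have hQB : Q * B = 0 := by
    have := congrArg conjTranspose hBQ
    rwa [conjTranspose_mul, hQherm, hB.1.eq, conjTranspose_zero] at this
  -- Q is PSD
  have hQpsd : Q.PosSemidef := by
    have hdq : (diagonal q).PosSemidef := by
      refine PosSemidef.diagonal fun i => ?_
      by_cases h : d i = 0 <;> simp [hq, h]
    have := hdq.mul_mul_conjTranspose_same V
    rwa [← Matrix.star_eq_conjTranspose, ← hQ] at this
  -- Q * A * Q = 0
  have hQAQ : Q * A * Q = 0 := by
    have h1 : (Q * A * Q).PosSemidef := by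
      have := hA.conjTranspose_mul_mul_same Q
      rwa [hQherm] at this
    have h2 : (-(Q * A * Q)).PosSemidef := by
      have := hBA.conjTranspose_mul_mul_same Q
      rw [hQherm, Matrix.mul_sub, Matrix.sub_mul, hQB, Matrix.zero_mul, zero_sub] at this
      exact this
    exact aux_psd_neg_zero h1 h2
  -- A * Q = 0 and Q * A = 0
  have hsAQ : hA.sqrt * Q = 0 := by
    rw [← Matrix.conjTranspose_mul_self_eq_zero]
    rw [conjTranspose_mul, hQherm, hA.posSemidef_sqrt.1.eq, ← Matrix.mul_assoc,
      Matrix.mul_assoc Q, hA.sqrt_mul_self]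
    exact hQAQ
  have hAQ : A * Q = 0 := by
    rw [← hA.sqrt_mul_self, Matrix.mul_assoc, hsAQ, Matrix.mul_zero]
  have hQA : Q * A = 0 := by
    have := congrArg conjTranspose hAQ
    rwa [conjTranspose_mul, hQherm, hA.1.eq, conjTranspose_zero] at this
  -- S is Hermitian
  have hSherm : Sᴴ = S := by
    rw [hS, ← Matrix.star_eq_conjTranspose, Matrix.star_mul, Matrix.star_mul, star_star,
      Matrix.star_eq_conjTranspose (diagonal f), diagonal_conjTranspose]
    have : star f = f := by
      funext i; simp [hf]
    rw [this, Matrix.mul_assoc]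
  -- the effect C
  refine ⟨S * A * S, ?_, ?_, ?_⟩
  · have := hA.conjTranspose_mul_mul_same S
    rwa [hSherm] at this
  · have hkey : 1 - S * A * S = Q + S * (B - A) * S := by
      rw [Matrix.mul_sub, Matrix.sub_mul, hSBS]
      rw [← hPQ]; abel
    rw [hkey]
    refine PosSemidef.add hQpsd ?_
    have := hBA.conjTranspose_mul_mul_same S
    rwa [hSherm] at this
  · rw [show hB.sqrt * (S * A * S) * hB.sqrt
        = (hB.sqrt * S) * A * (S * hB.sqrt) by simp only [Matrix.mul_assoc], hBS, hSB]
    have hP1Q : P = 1 - Q := by rw [← hPQ]; abel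
    rw [hP1Q]
    simp [Matrix.sub_mul, Matrix.mul_sub, hAQ, hQA]

end Aux

/-- Every sequential endomorphism of 𝔼₂ is order preserving for the Loewner order. -/
theorem sequential_endo_order_preserving
    (φ : Matrix (Fin 2) (Fin 2) ℂ → Matrix (Fin 2) (Fin 2) ℂ)
    (hmaps : ∀ A : Matrix (Fin 2) (Fin 2) ℂ, IsEffect2 A → IsEffect2 (φ A))
    (hseq : ∀ (A B : Matrix (Fin 2) (Fin 2) ℂ) (hA : IsEffect2 A)
      (hB : IsEffect2 B),
      φ (hA.1.sqrt * B * hA.1.sqrt) =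
        (hmaps A hA).1.sqrt * φ B * (hmaps A hA).1.sqrt) :
    ∀ A B : Matrix (Fin 2) (Fin 2) ℂ, IsEffect2 A → IsEffect2 B →
      (B - A).PosSemidef → (φ B - φ A).PosSemidef := by
  intro A B hAe hBe hsub
  obtain ⟨C, hC1, hC2, hfact⟩ := aux_factor hAe.1 hBe.1 hsub
  have hCe : IsEffect2 C := ⟨hC1, hC2⟩
  have hφA : φ A = (hmaps B hBe).1.sqrt * φ C * (hmaps B hBe).1.sqrt := by
    rw [← hfact]; exact hseq B C hBe hCe
  have hφB : φ B = (hmaps B hBe).1.sqrt * 1 * (hmaps B hBe).1.sqrt := by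
    rw [Matrix.mul_one, (hmaps B hBe).1.sqrt_mul_self]
  have hkey : φ B - φ A
      = (hmaps B hBe).1.sqrt * (1 - φ C) * (hmaps B hBe).1.sqrt := by
    rw [hφA]; nth_rewrite 1 [hφB]
    rw [Matrix.mul_sub, Matrix.sub_mul]
  rw [hkey]
  have := (hmaps C hCe).2.conjTranspose_mul_mul_same (hmaps B hBe).1.sqrt
  rwa [(hmaps B hBe).1.posSemidef_sqrt.1.eq] at this
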